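/- arXiv:2306.07126 — 2 statements merged into one kernel-verified Lean document; each statement's English description precedes it below -/
import Mathlib

section
/- Let π be a disjunctive logic program. If M is a stable model of π, then M̄ = {∼p : p ∈ Atoms(π) \ M} is a stable extension of the induced assumption-based framework ABF(π). -/
namespace DLP

/-- Formulas of the language ℒ: disjunctions of atoms `p₁ ∨ … ∨ p_n`,
negated atoms `∼p`, and program rules
`q₁,…,q_m, ∼r₁,…,∼r_k → p₁ ∨ … ∨ p_n`. -/
inductive Formula (α : Type*) where
  | disj : List α → Formula α
  | neg  : α → Formula α
  | rule : List α → List α → List α → Formula α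

/-- A program rule: positive body atoms, negated body atoms, and head disjuncts. -/
structure Rule (α : Type*) where
  pos : List α
  neg : List α
  head : List α

/-- The ℒ-formula corresponding to a rule. -/
def Rule.toFormula {α : Type*} (r : Rule α) : Formula α :=
  Formula.rule r.pos r.neg r.head

/-- The set of ℒ-formulas corresponding to a program. -/
def formulas {α : Type*} (π : Set (Rule α)) : Set (Formula α) :=
  Rule.toFormula '' π

/-- `Atoms(π)`: the atoms occurring in the program π. -/
def atoms {α : Type*} (π : Set (Rule α)) : Set α :=
  {p | ∃ r ∈ π, p ∈ r.pos ∨ p ∈ r.neg ∨ p ∈ r.head}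

/-- `∼Atoms(π)`. -/
def negAtoms {α : Type*} (π : Set (Rule α)) : Set (Formula α) :=
  Formula.neg '' atoms π

/-- Satisfaction of an ℒ-formula by a set of atoms `M`. -/
def satisfies {α : Type*} (M : Set α) : Formula α → Prop
  | Formula.disj l => ∃ p ∈ l, p ∈ M
  | Formula.neg p => p ∉ M
  | Formula.rule pb nb hd =>
      ((∀ p ∈ pb, p ∈ M) ∧ (∀ q ∈ nb, q ∉ M)) → ∃ p ∈ hd, p ∈ M

/-- `M` is a model of the program π. -/
def isModel {α : Type*} (M : Set α) (π : Set (Rule α)) : Prop :=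
  ∀ r ∈ π, satisfies M r.toFormula

/-- The Gelfond–Lifschitz reduct `π^S`. -/
def reduct {α : Type*} (π : Set (Rule α)) (S : Set α) : Set (Rule α) :=
  {r' | ∃ r ∈ π, (∀ x ∈ r.neg, x ∉ S) ∧ r' = ⟨r.pos, [], r.head⟩}

/-- `M` is a (two-valued) stable model of π: a ⊆-minimal model of `π^M`. -/
def stableModel {α : Type*} (π : Set (Rule α)) (M : Set α) : Prop :=
  M ⊆ atoms π ∧ isModel M (reduct π M) ∧
    ∀ N : Set α, N ⊂ M → ¬ isModel N (reduct π M)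

/-- The consequence relation `Δ ⊢ φ`, generated by membership and the rules
[MP], [Res] and [RBC].  Note that `Δ ⊢ p` for an atom `p` is rendered as
`Derives Δ (Formula.disj [p])`, and the premise `→ φᵢ` used in [RBC] is the
rule with empty body and head `φᵢ`. -/
inductive Derives {α : Type*} : Set (Formula α) → Formula α → Prop
  | mem {Δ : Set (Formula α)} {φ : Formula α} :
      φ ∈ Δ → Derives Δ φ
  | mp {Δ : Set (Formula α)} {pb nb hd : List α} :
      Derives Δ (Formula.rule pb nb hd) →
      (∀ p ∈ pb, Derives Δ (Formula.disj [p])) →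
      (∀ q ∈ nb, Derives Δ (Formula.neg q)) →
      Derives Δ (Formula.disj hd)
  | res {Δ : Set (Formula α)} {L₁ Φ L₂ : List α} :
      Derives Δ (Formula.disj (L₁ ++ Φ ++ L₂)) →
      (∀ q ∈ Φ, Derives Δ (Formula.neg q)) →
      Derives Δ (Formula.disj (L₁ ++ L₂))
  | rbc {Δ : Set (Formula α)} {Φ hd : List α} :
      Derives Δ (Formula.disj Φ) →
      (∀ q ∈ Φ, Derives (Δ ∪ {Formula.rule [] [] [q]}) (Formula.disj hd)) →
      Derives Δ (Formula.disj hd)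

/-- `M̄ = {∼p : p ∈ Atoms(π) \ M}`. -/
def barSet {α : Type*} (π : Set (Rule α)) (M : Set α) : Set (Formula α) :=
  Formula.neg '' (atoms π \ M)

/-- `⌊Δ⌋ = {p : ∼p ∈ Δ}`. -/
def floorSet {α : Type*} (Δ : Set (Formula α)) : Set α :=
  {p | Formula.neg p ∈ Δ}

/-- `Δ̲ = Atoms(π) \ ⌊Δ⌋`. -/
def underline {α : Type*} (π : Set (Rule α)) (Δ : Set (Formula α)) : Set α :=
  atoms π \ floorSet Δ

/-- In `ABF(π)`, a set of assumptions `Δ` attacks the assumption `∼p`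
iff `π ∪ Δ ⊢ p`. -/
def attacks {α : Type*} (π : Set (Rule α)) (Δ : Set (Formula α)) (p : α) : Prop :=
  Derives (formulas π ∪ Δ) (Formula.disj [p])

/-- `Δ` is conflict-free in `ABF(π)`: no subset of `Δ` attacks a member of `Δ`. -/
def conflictFree {α : Type*} (π : Set (Rule α)) (Δ : Set (Formula α)) : Prop :=
  ¬ ∃ Δ' ⊆ Δ, ∃ p : α, Formula.neg p ∈ Δ ∧ attacks π Δ' p

/-- `Δ` is a stable extension of `ABF(π)`: `Δ ⊆ ∼Atoms(π)` is conflict-free and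
attacks every assumption in `∼Atoms(π) \ Δ`. -/
def stableExtension {α : Type*} (π : Set (Rule α)) (Δ : Set (Formula α)) : Prop :=
  Δ ⊆ negAtoms π ∧ conflictFree π Δ ∧
    ∀ p ∈ atoms π, Formula.neg p ∉ Δ → attacks π Δ p

/-- Soundness of the consequence relation: a model of the premises
satisfies every derivable formula. -/
lemma sound {α : Type*} (M : Set α) :
    ∀ {Δ : Set (Formula α)} {φ : Formula α}, Derives Δ φ →
      (∀ ψ ∈ Δ, satisfies M ψ) → satisfies M φ := by
  intro Δ φ h
  induction h with
  | mem hφ => intro hΔ; exact hΔ _ hφ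
  | @mp Δ pb nb hd _ _ _ ihr ihp ihn =>
      intro hΔ
      have hr := ihr hΔ
      have hpos : ∀ x ∈ pb, x ∈ M := by
        intro x hx
        obtain ⟨y, hy, hyM⟩ := ihp x hx hΔ
        simp only [List.mem_singleton] at hy; subst hy; exact hyM
      have hneg : ∀ q ∈ nb, q ∉ M := fun q hq => ihn q hq hΔ
      exact hr ⟨hpos, hneg⟩
  | @res Δ L₁ Φ L₂ _ _ ih1 ih2 =>
      intro hΔ
      obtain ⟨x, hx, hxM⟩ := ih1 hΔ
      refine ⟨x, ?_, hxM⟩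
      simp only [List.mem_append] at hx ⊢
      rcases hx with (h | h) | h
      · exact Or.inl h
      · exact absurd hxM (ih2 x h hΔ)
      · exact Or.inr h
  | rbc _ _ ih1 ih2 =>
      intro hΔ
      obtain ⟨q, hq, hqM⟩ := ih1 hΔ
      refine ih2 q hq ?_
      intro ψ hψ
      rcases hψ with h | h
      · exact hΔ _ h
      · simp only [Set.mem_singleton_iff] at h; subst h
        intro _
        exact ⟨q, List.mem_singleton_self q, hqM⟩

/-- Stripping refutable disjuncts from a derivable disjunction, using [Res]
one atom at a time. -/
lemma strip {α : Type*} (Δ : Set (Formula α)) (P : α → Bool) :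
    ∀ (l₂ l₁ : List α), (∀ q ∈ l₂, P q = false → Derives Δ (Formula.neg q)) →
      Derives Δ (Formula.disj (l₁ ++ l₂)) →
      Derives Δ (Formula.disj (l₁ ++ l₂.filter P)) := by
  intro l₂
  induction l₂ with
  | nil => intro l₁ _ h; simpa using h
  | cons q t ih =>
      intro l₁ hneg hder
      by_cases hq : P q = true
      · have h1 : Derives Δ (Formula.disj ((l₁ ++ [q]) ++ t)) := by
          simpa using hder
        have h2 := ih (l₁ ++ [q]) (fun x hx h => hneg x (List.mem_cons_of_mem _ hx) h) h1
        have : (l₁ ++ [q]) ++ t.filter P = l₁ ++ (q :: t).filter P := by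
          simp [List.filter, hq]
        rwa [this] at h2
      · have hqf : P q = false := by simpa using hq
        have h1 : Derives Δ (Formula.disj (l₁ ++ [q] ++ t)) := by
          simpa using hder
        have h2 : Derives Δ (Formula.disj (l₁ ++ t)) :=
          Derives.res h1 (by
            intro x hx
            simp only [List.mem_singleton] at hx
            rw [hx]
            exact hneg q List.mem_cons_self hqf)
        have h3 := ih l₁ (fun x hx h => hneg x (List.mem_cons_of_mem _ hx) h) h2
        have : t.filter P = (q :: t).filter P := by simp [List.filter, hqf]
        rwa [this] at h3

open Classical in
/-- Key completeness lemma: if every model `N` of the reduct with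
`C ⊆ N ⊆ M` contains `p`, then `p` is derivable from the program together with
`M̄` and the facts `→ q` for `q ∈ C`. -/
lemma key {α : Type*} (π : Set (Rule α)) (M : Set α) (hfinM : M.Finite) (p : α) :
    ∀ n : ℕ, ∀ C : Set α, (M \ C).ncard = n → C ⊆ M →
      (∀ N : Set α, C ⊆ N → N ⊆ M → isModel N (reduct π M) → p ∈ N) →
      Derives (formulas π ∪ barSet π M ∪
          (fun q => Formula.rule ([] : List α) [] [q]) '' C)
        (Formula.disj [p]) := by
  intro n
  induction n using Nat.strong_induction_on with
  | _ n ih =>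
  intro C hcard hCM hmodels
  set Δ : Set (Formula α) := formulas π ∪ barSet π M ∪
      (fun q => Formula.rule ([] : List α) [] [q]) '' C with hΔdef
  set D : Set α := {q | q ∈ M ∧ Derives Δ (Formula.disj [q])} with hDdef
  have hCD : C ⊆ D := by
    intro q hq
    refine ⟨hCM hq, ?_⟩
    refine Derives.mp (pb := []) (nb := []) ?_ (by simp) (by simp)
    exact Derives.mem (Or.inr ⟨q, hq, rfl⟩)
  have hDM : D ⊆ M := fun q hq => hq.1
  by_cases hmod : isModel D (reduct π M)
  · exact (hmodels D hCD hDM hmod).2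
  · simp only [isModel, not_forall] at hmod
    obtain ⟨r', hr'mem, hr'sat⟩ := hmod
    obtain ⟨r, hrπ, hrneg, hr'eq⟩ := hr'mem
    subst hr'eq
    simp only [Rule.toFormula, satisfies, not_forall] at hr'sat
    push_neg at hr'sat
    obtain ⟨⟨hpos, -⟩, hnohead⟩ := hr'sat
    -- derive the head disjunction by [MP]
    have hhd : Derives Δ (Formula.disj r.head) := by
      refine Derives.mp (pb := r.pos) (nb := r.neg) ?_ ?_ ?_
      · exact Derives.mem (Or.inl (Or.inl ⟨r, hrπ, rfl⟩))
      · intro x hx; exact (hpos x hx).2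
      · intro q hq
        refine Derives.mem (Or.inl (Or.inr ?_))
        exact ⟨q, ⟨⟨r, hrπ, Or.inr (Or.inl hq)⟩, hrneg q hq⟩, rfl⟩
    -- strip head atoms outside M via [Res]
    have hstrip : Derives Δ (Formula.disj (r.head.filter (fun q => decide (q ∈ M)))) := by
      have := strip Δ (fun q => decide (q ∈ M)) r.head []
        (by
          intro q hq hfalse
          have hqM : q ∉ M := by simpa using hfalse
          refine Derives.mem (Or.inl (Or.inr ?_))
          exact ⟨q, ⟨⟨r, hrπ, Or.inr (Or.inr hq)⟩, hqM⟩, rfl⟩)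
        (by simpa using hhd)
      simpa using this
    -- reason by cases over the remaining head atoms via [RBC]
    refine Derives.rbc hstrip ?_
    intro q hqΦ
    have hqhead : q ∈ r.head := List.mem_of_mem_filter hqΦ
    have hqM : q ∈ M := by
      have := List.of_mem_filter hqΦ
      simpa using this
    have hqD : q ∉ D := fun h => hnohead q hqhead h
    have hqC : q ∉ C := fun h => hqD (hCD h)
    have hss : M \ insert q C ⊂ M \ C := by
      constructor
      · intro x hx
        exact ⟨hx.1, fun hxc => hx.2 (Set.mem_insert_of_mem _ hxc)⟩
      · intro hsub
        exact ((hsub ⟨hqM, hqC⟩).2 (Set.mem_insert q C))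
    have hlt : (M \ insert q C).ncard < n := by
      rw [← hcard]
      exact Set.ncard_lt_ncard hss hfinM.diff
    have hres := ih _ hlt (insert q C) rfl
      (by
        intro x hx
        rcases hx with h | h
        · rw [h]; exact hqM
        · exact hCM h)
      (by intro N hCN hNM hNmod
          exact hmodels N (fun x hx => hCN (Set.mem_insert_of_mem _ hx)) hNM hNmod)
    have heq : formulas π ∪ barSet π M ∪
        (fun q => Formula.rule ([] : List α) [] [q]) '' (insert q C) =
        Δ ∪ {Formula.rule [] [] [q]} := by
      rw [hΔdef, Set.image_insert_eq]
      ext φ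
      simp only [Set.mem_union, Set.mem_insert_iff, Set.mem_singleton_iff]
      tauto
    rwa [heq] at hres

/-- A stable model is in particular a model of the program itself. -/
lemma stable_isModel {α : Type*} (π : Set (Rule α)) (M : Set α)
    (hst : stableModel π M) : isModel M π := by
  intro r hr
  intro ⟨hpos, hneg⟩
  exact hst.2.1 ⟨r.pos, [], r.head⟩ ⟨r, hr, hneg, rfl⟩ ⟨hpos, by simp⟩

/-- if `M` is a stable model of π then `M̄` is a stable extension
of `ABF(π)`. -/
theorem stmt12 {α : Type*} (π : Set (Rule α)) (hfin : π.Finite)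
    (M : Set α) (hst : stableModel π M) :
    stableExtension π (barSet π M) := by
  have hMπ : isModel M π := stable_isModel π M hst
  have hMsat : ∀ ψ ∈ formulas π ∪ barSet π M, satisfies M ψ := by
    intro ψ hψ
    rcases hψ with ⟨r, hr, rfl⟩ | ⟨q, ⟨-, hq2⟩, rfl⟩
    · exact hMπ r hr
    · exact hq2
  have hatomsfin : (atoms π).Finite := by
    have : atoms π ⊆ ⋃ r ∈ π, {p | p ∈ r.pos ∨ p ∈ r.neg ∨ p ∈ r.head} := by
      intro x ⟨r, hr, hx⟩
      exact Set.mem_biUnion hr hx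
    refine Set.Finite.subset (Set.Finite.biUnion hfin ?_) this
    intro r _
    have : {p | p ∈ r.pos ∨ p ∈ r.neg ∨ p ∈ r.head} ⊆
        {p | p ∈ r.pos ++ r.neg ++ r.head} := by
      intro x hx; simp only [Set.mem_setOf_eq, List.mem_append] at hx ⊢
      tauto
    exact ((r.pos ++ r.neg ++ r.head).finite_toSet).subset this
  have hMfin : M.Finite := hatomsfin.subset hst.1
  refine ⟨?_, ?_, ?_⟩
  · exact Set.image_mono Set.diff_subset
  · rintro ⟨Δ', hΔ'sub, p, hpmem, hatt⟩
    obtain ⟨p', ⟨-, hp'M⟩, hpe⟩ := hpmem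
    have hpp : p' = p := by injection hpe
    subst hpp
    have hsat : satisfies M (Formula.disj [p']) := by
      refine sound M hatt ?_
      intro ψ hψ
      rcases hψ with h | h
      · exact hMsat ψ (Or.inl h)
      · exact hMsat ψ (Or.inr (hΔ'sub h))
    obtain ⟨x, hx, hxM⟩ := hsat
    simp only [List.mem_singleton] at hx
    rw [hx] at hxM
    exact hp'M hxM
  · intro p hpatoms hpnot
    have hpM : p ∈ M := by
      by_contra hpM
      exact hpnot ⟨p, ⟨hpatoms, hpM⟩, rfl⟩
    have := key π M hMfin p (M \ (∅ : Set α)).ncard ∅ rfl (Set.empty_subset M)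
      (by
        intro N _ hNM hNmod
        by_cases hNe : N = M
        · subst hNe; exact hpM
        · exact absurd hNmod (hst.2.2 N (Set.ssubset_iff_subset_ne.mpr ⟨hNM, hNe⟩)))
    simpa [attacks] using this

end DLP
end

section
/- Let π be a disjunctive logic program. If M is a stable model of π, then M̄ = {∼p : p ∈ Atoms(π) \ M} is conflict-free in the induced assumption-based framework ABF(π): there is no atom p with ∼p ∈ M̄ and π ∪ M̄ ⊢ p. -/
/-! The calculus `Derives` is sound for classical satisfaction. A stable model `M` is a model of
its reduct, hence of π, and it satisfies every `∼p ∈ M̄`; so every atom derivable from `π ∪ M̄`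
lies in `M`, whereas `∼p ∈ M̄` means `p ∉ M`. -/

namespace DLP

lemma derives_sound {α : Type*} {M : Set α} {Δ : Set (Formula α)} {φ : Formula α}
    (h : Derives Δ φ) (hΔ : ∀ ψ ∈ Δ, satisfies M ψ) : satisfies M φ := by
  induction h generalizing M with
  | mem hφ => exact hΔ _ hφ
  | mp _ _ _ ih ihPos ihNeg =>
    refine ih hΔ ⟨fun p hp => ?_, fun q hq => ihNeg q hq hΔ⟩
    simpa [satisfies] using ihPos p hp hΔ
  | res _ _ ih ihNeg =>
    obtain ⟨p, hp, hpM⟩ := ih hΔ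
    rcases List.mem_append.1 hp with hp | hp
    · rcases List.mem_append.1 hp with hp | hp
      · exact ⟨p, List.mem_append_left _ hp, hpM⟩
      · exact absurd hpM (ihNeg p hp hΔ)
    · exact ⟨p, List.mem_append_right _ hp, hpM⟩
  | rbc _ _ ih ihCase =>
    obtain ⟨q, hq, hqM⟩ := ih hΔ
    refine ihCase q hq ?_
    rintro ψ (hψ | rfl)
    · exact hΔ ψ hψ
    · exact fun _ => ⟨q, List.mem_singleton_self q, hqM⟩

lemma isModel_of_isModel_reduct {α : Type*} {π : Set (Rule α)} {M : Set α}
    (h : isModel M (reduct π M)) : isModel M π := by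
  rintro r hr ⟨hpos, hneg⟩
  exact h ⟨r.pos, [], r.head⟩ ⟨r, hr, hneg, rfl⟩ ⟨hpos, by simp⟩

lemma satisfies_of_mem_formulas_union_barSet {α : Type*} {π : Set (Rule α)} {M : Set α}
    (hM : isModel M π) : ∀ ψ ∈ formulas π ∪ barSet π M, satisfies M ψ := by
  rintro ψ (⟨r, hr, rfl⟩ | ⟨a, ⟨-, haM⟩, rfl⟩)
  · exact hM r hr
  · exact haM

theorem stmt14_general {α : Type*} (π : Set (Rule α))
    (M : Set α) (hst : stableModel π M) :
    ¬ ∃ p : α, Formula.neg p ∈ barSet π M ∧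
        Derives (formulas π ∪ barSet π M) (Formula.disj [p]) := by
  rintro ⟨p, ⟨q, ⟨-, hqM⟩, ⟨⟩⟩, hp⟩
  have hM : isModel M π := isModel_of_isModel_reduct hst.2.1
  obtain ⟨x, hx, hxM⟩ := derives_sound hp (satisfies_of_mem_formulas_union_barSet hM)
  exact hqM (List.mem_singleton.1 hx ▸ hxM)

/-- if `M` is a stable model of π then `M̄` is conflict-free in
`ABF(π)`: there is no atom `p` with `∼p ∈ M̄` and `π ∪ M̄ ⊢ p`. -/
theorem stmt14 {α : Type*} (π : Set (Rule α)) (hfin : π.Finite)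
    (M : Set α) (hst : stableModel π M) :
    ¬ ∃ p : α, Formula.neg p ∈ barSet π M ∧
        Derives (formulas π ∪ barSet π M) (Formula.disj [p]) :=
  stmt14_general π M hst

end DLP
end
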